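/- arXiv:1201.6185 — 5 statements merged into one kernel-verified Lean document; each statement's English description precedes it below -/
import Mathlib

section
/- Fix r, s ≥ 0, n = r + s, and n₁, n₂ ≥ 0 with n₁ + n₂ = n. For σ ∈ Sh_{r,s}, set r₁ = #{i ∈ {1,…,r} : σ(i) ≤ n₁} and s₁ = #{i ∈ {r+1,…,n} : σ(i) ≤ n₁}. Then: (a) r₁ + s₁ = n₁; (b) {i ≤ r : σ(i) ≤ n₁} = {1,…,r₁} and {i > r : σ(i) ≤ n₁} = {r+1,…,r+s₁}; (c) the map σ₁ of {1,…,n₁} defined by σ₁(i) = σ(i) for 1 ≤ i ≤ r₁ and σ₁(r₁+j) = σ(r+j) for 1 ≤ j ≤ s₁ is a well-defined (r₁,s₁)-shuffle, and the map σ₂ of {1,…,n₂} defined by σ₂(i) = σ(r₁+i) − n₁ for 1 ≤ i ≤ r−r₁ and σ₂((r−r₁)+j) = σ(r+s₁+j) − n₁ for 1 ≤ j ≤ s−s₁ is a well-defined (r−r₁, s−s₁)-shuffle; (d) the assignment σ ↦ (r₁, σ₁, σ₂) is a bijection from Sh_{r,s} onto the disjoint union, over all r₁, s₁ with 0 ≤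 r₁ ≤ r, 0 ≤ s₁ ≤ s and r₁ + s₁ = n₁, of the sets Sh_{r₁,s₁} × Sh_{r−r₁, s−s₁}. (This is the combinatorial bijection underlying the compatibility of the shuffle product with the deconcatenation coproduct, making the tensor algebra a rational bialgebra.) -/
/-- `σ` is an `(r, n-r)`-shuffle: strictly increasing on `{0,…,r-1}` and on
`{r,…,n-1}` (0-based indexing). -/
def IsShuffle (n r : ℕ) (σ : Equiv.Perm (Fin n)) : Prop :=
  ∀ i j : Fin n, i < j → ((j : ℕ) < r ∨ r ≤ (i : ℕ)) → σ i < σ j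

/-- The value of a permutation of `Fin m` at a natural number (junk value `0`
outside the range). -/
def ap {m : ℕ} (σ : Equiv.Perm (Fin m)) (i : ℕ) : ℕ :=
  if h : i < m then (σ ⟨i, h⟩ : ℕ) else 0

/-- `r₁(σ)`: the number of indices `i` in the first block `{0,…,r-1}` with
`σ(i) < n₁`. -/
def rOne (r s n₁ : ℕ) (σ : Equiv.Perm (Fin (r + s))) : ℕ :=
  (Finset.univ.filter fun i : Fin (r + s) => (i : ℕ) < r ∧ (σ i : ℕ) < n₁).card

/-- `s₁(σ)`: the number of indices `i` in the second block `{r,…,r+s-1}` with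
`σ(i) < n₁`. -/
def sOne (r s n₁ : ℕ) (σ : Equiv.Perm (Fin (r + s))) : ℕ :=
  (Finset.univ.filter fun i : Fin (r + s) => r ≤ (i : ℕ) ∧ (σ i : ℕ) < n₁).card

/-- The defining value equations for the pair `(σ₁, σ₂)` associated to `σ` and the
splitting `(a, b) = (r₁, s₁)`: `σ₁(i) = σ(i)` for `i < a`, `σ₁(a+j) = σ(r+j)` for
`j < b`, `σ₂(i) = σ(a+i) − n₁` for `i < r−a`, and `σ₂((r−a)+j) = σ(r+b+j) − n₁`
for `j < s−b` (0-based indexing). -/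
def Matches (r s n₁ n₂ : ℕ) (a b : ℕ) (σ : Equiv.Perm (Fin (r + s)))
    (σ₁ : Equiv.Perm (Fin n₁)) (σ₂ : Equiv.Perm (Fin n₂)) : Prop :=
  (∀ i < a, ap σ₁ i = ap σ i) ∧
  (∀ j < b, ap σ₁ (a + j) = ap σ (r + j)) ∧
  (∀ i < r - a, ap σ₂ i = ap σ (a + i) - n₁) ∧
  (∀ j < s - b, ap σ₂ ((r - a) + j) = ap σ (r + b + j) - n₁)

/-!
Write a shuffle `σ` as its two increasing blocks `ap σ` on `[0, r)` and `ap σ (r + ·)` on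
`[0, s)`. Monotonicity makes the positions of each block sent below `n₁` an initial segment,
of lengths `r₁` and `s₁`, and `r₁ + s₁ = n₁` because `σ` is a bijection. Cutting both blocks
there, the lower pieces form `σ₁` and the upper pieces, shifted down by `n₁`, form `σ₂`;
conversely, gluing `σ₁` and `σ₂ + n₁` back into two blocks of lengths `r` and `s` recovers
`σ`. A permutation is determined by its values, which gives both uniqueness statements.
-/

open Set

section ap

variable {m : ℕ} (σ : Equiv.Perm (Fin m))

lemma ap_of_lt {i : ℕ} (h : i < m) : ap σ i = σ ⟨i, h⟩ := dif_pos h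

@[simp] lemma ap_val (i : Fin m) : ap σ i = σ i := ap_of_lt σ i.isLt

lemma ap_lt {i : ℕ} (h : i < m) : ap σ i < m := (ap_of_lt σ h).symm ▸ (σ _).isLt

lemma ap_bijOn : BijOn (ap σ) (Iio m) (Iio m) := by
  refine ⟨fun i hi => ap_lt σ hi, fun i hi j hj hij => ?_, fun y hy => ?_⟩
  · rw [ap_of_lt σ hi, ap_of_lt σ hj] at hij
    simpa using congrArg Fin.val (σ.injective (Fin.ext hij))
  · exact ⟨σ.symm ⟨y, hy⟩, (σ.symm ⟨y, hy⟩).isLt, by simp⟩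

lemma perm_eq_of_eqOn_ap {τ : Equiv.Perm (Fin m)} (h : EqOn (ap σ) (ap τ) (Iio m)) : σ = τ :=
  Equiv.ext fun i => Fin.ext (by simpa using h i.isLt)

lemma exists_perm_eqOn_ap {f : ℕ → ℕ} (hf : BijOn f (Iio m) (Iio m)) :
    ∃ σ : Equiv.Perm (Fin m), EqOn (ap σ) f (Iio m) :=
  ⟨Fin.equivSubtype.trans ((hf.equiv f).trans Fin.equivSubtype.symm), fun i hi => by
    rw [ap_of_lt _ hi]; rfl⟩

end ap

def blockJoin (a : ℕ) (f g : ℕ → ℕ) (k : ℕ) : ℕ := if k < a then f k else g (k - a)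

section blockJoin

variable {a b k : ℕ} {f g : ℕ → ℕ}

lemma blockJoin_of_lt (h : k < a) : blockJoin a f g k = f k := if_pos h

@[simp] lemma blockJoin_add (j : ℕ) : blockJoin a f g (a + j) = g j := by
  simp [blockJoin]

lemma eqOn_blockJoin_iff {φ : ℕ → ℕ} :
    EqOn φ (blockJoin a f g) (Iio (a + b)) ↔
      EqOn φ f (Iio a) ∧ EqOn (fun j => φ (a + j)) g (Iio b) := by
  refine ⟨fun h => ⟨fun i hi => ?_, fun j hj => ?_⟩, fun ⟨hf, hg⟩ k hk => ?_⟩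
  · rw [h (by simp at hi ⊢; omega), blockJoin_of_lt hi]
  · dsimp only
    rw [h (by simp at hj ⊢; omega), blockJoin_add]
  · simp only [blockJoin]
    split_ifs with hka
    · exact hf hka
    · have := @hg (k - a) (by simp at hk ⊢; omega)
      simpa [Nat.add_sub_cancel' (not_lt.1 hka)] using this

lemma strictMonoOn_blockJoin (hf : StrictMonoOn f (Iio a)) (hg : StrictMonoOn g (Iio b))
    (hfg : ∀ i < a, ∀ j < b, f i < g j) : StrictMonoOn (blockJoin a f g) (Iio (a + b)) := by
  intro x hx y hy hxy
  simp only [mem_Iio] at hx hy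
  simp only [blockJoin]
  split_ifs with hxa hya hya
  · exact hf hxa hya hxy
  · exact hfg x hxa (y - a) (by omega)
  · omega
  · exact hg (show x - a < b by omega) (show y - a < b by omega) (by omega)

end blockJoin

lemma isShuffle_iff {m r s : ℕ} (hm : r + s = m) {σ : Equiv.Perm (Fin m)} :
    IsShuffle m r σ ↔
      StrictMonoOn (ap σ) (Iio r) ∧ StrictMonoOn (fun j => ap σ (r + j)) (Iio s) := by
  subst hm
  constructor
  · intro hσ
    refine ⟨fun i hi j hj hij => ?_, fun i hi j hj hij => ?_⟩ <;> simp only [mem_Iio] at hi hj ⊢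
    · rw [ap_of_lt σ (by omega), ap_of_lt σ (by omega)]
      exact hσ _ _ (Fin.mk_lt_mk.2 hij) (Or.inl hj)
    · rw [ap_of_lt σ (by omega), ap_of_lt σ (by omega)]
      exact hσ _ _ (Fin.mk_lt_mk.2 (by omega)) (Or.inr (Nat.le_add_right r i))
  · rintro ⟨h₁, h₂⟩ i j hij (hj | hi)
    · simpa using h₁ (show (i : ℕ) < r by omega) hj hij
    · have := h₂ (show (i : ℕ) - r < s by omega) (show (j : ℕ) - r < s by omega)
        (Nat.sub_lt_sub_right hi hij)
      simpa [Nat.add_sub_cancel' hi, Nat.add_sub_cancel' (hi.trans hij.le)] using this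

lemma exists_lt_iff_lt_of_monotoneOn {f : ℕ → ℕ} {r : ℕ} (hf : MonotoneOn f (Iio r)) (c : ℕ) :
    ∃ t ≤ r, ∀ i < r, f i < c ↔ i < t := by
  classical
  have hex : ∃ t, t = r ∨ c ≤ f t := ⟨r, Or.inl rfl⟩
  refine ⟨Nat.find hex, Nat.find_min' hex (Or.inl rfl), fun i hi => ⟨fun hfi => ?_, fun hit => ?_⟩⟩
  · by_contra! hti
    rcases Nat.find_spec hex with h | h
    · omega
    · exact (h.trans (hf (show Nat.find hex < r by omega) hi hti)).not_gt hfi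
  · exact not_le.1 (not_or.1 (Nat.find_min hex hit)).2

lemma card_filter_range_of_forall_lt_iff {P : ℕ → Prop} [DecidablePred P] {r t : ℕ}
    (ht : t ≤ r) (h : ∀ i < r, P i ↔ i < t) : ((Finset.range r).filter P).card = t := by
  have : (Finset.range r).filter P = Finset.range t := by
    ext i
    simp only [Finset.mem_filter, Finset.mem_range]
    exact ⟨fun ⟨hi, hp⟩ => (h i hi).1 hp, fun hi => ⟨by omega, (h i (by omega)).2 hi⟩⟩
  rw [this, Finset.card_range]

section counts

variable {r s n₁ : ℕ} (σ : Equiv.Perm (Fin (r + s)))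

lemma rOne_eq_card : rOne r s n₁ σ = ((Finset.range r).filter fun i => ap σ i < n₁).card := by
  refine Finset.card_nbij (fun i => i.val) (fun i hi => ?_) Fin.val_injective.injOn
    (fun k hk => ?_)
  · simp only [Finset.coe_filter, Finset.mem_univ, true_and, mem_ofPred_eq, Finset.mem_range,
      ap_val] at hi ⊢
    exact hi
  · simp only [Finset.coe_filter, Finset.mem_range, mem_ofPred_eq] at hk
    exact ⟨⟨k, by omega⟩, by simpa [← ap_of_lt σ (show k < r + s by omega)] using hk, rfl⟩

lemma sOne_eq_card :
    sOne r s n₁ σ = ((Finset.range s).filter fun j => ap σ (r + j) < n₁).card := by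
  refine Finset.card_nbij (fun i => i.val - r) (fun i hi => ?_) (fun i hi j hj hij => ?_)
    (fun k hk => ?_)
  · simp only [Finset.coe_filter, Finset.mem_univ, true_and, mem_ofPred_eq,
      Finset.mem_range] at hi ⊢
    rw [Nat.add_sub_cancel' hi.1, ap_val]
    exact ⟨by omega, hi.2⟩
  · simp only [Finset.coe_filter, Finset.mem_univ, true_and, mem_ofPred_eq] at hi hj hij
    exact Fin.ext (by omega)
  · simp only [Finset.coe_filter, Finset.mem_range, mem_ofPred_eq] at hk
    exact ⟨⟨r + k, by omega⟩, by simpa [← ap_of_lt σ (show r + k < r + s by omega)] using hk.2,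
      by simp⟩

lemma rOne_le : rOne r s n₁ σ ≤ r :=
  (rOne_eq_card σ).trans_le ((Finset.card_filter_le _ _).trans (Finset.card_range r).le)

lemma sOne_le : sOne r s n₁ σ ≤ s :=
  (sOne_eq_card σ).trans_le ((Finset.card_filter_le _ _).trans (Finset.card_range s).le)

lemma rOne_add_sOne (hn : n₁ ≤ r + s) : rOne r s n₁ σ + sOne r s n₁ σ = n₁ := by
  rw [rOne_eq_card, sOne_eq_card, Finset.card_filter, Finset.card_filter, ← Finset.sum_range_add,
    ← Finset.card_filter]
  calc _ = (Finset.range n₁).card := by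
        refine Finset.card_nbij (ap σ) (fun k hk => ?_) ((ap_bijOn σ).injOn.mono fun k hk => ?_)
          (fun y hy => ?_)
        · simp only [Finset.coe_filter, Finset.mem_range, mem_ofPred_eq] at hk
          simpa using hk.2
        · simp only [Finset.coe_filter, Finset.mem_range, mem_ofPred_eq] at hk
          exact hk.1
        · simp only [Finset.coe_range, mem_Iio] at hy
          obtain ⟨x, hx, rfl⟩ := (ap_bijOn σ).surjOn (show y < r + s by omega)
          exact ⟨x, by simpa using ⟨hx, hy⟩, rfl⟩
    _ = n₁ := Finset.card_range n₁

lemma rOne_eq_of_forall_lt_iff {a : ℕ} (ha : a ≤ r) (h : ∀ i < r, ap σ i < n₁ ↔ i < a) :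
    rOne r s n₁ σ = a := by
  rw [rOne_eq_card, card_filter_range_of_forall_lt_iff ha h]

lemma sOne_eq_of_forall_lt_iff {b : ℕ} (hb : b ≤ s) (h : ∀ j < s, ap σ (r + j) < n₁ ↔ j < b) :
    sOne r s n₁ σ = b := by
  rw [sOne_eq_card, card_filter_range_of_forall_lt_iff hb h]

variable {σ}

lemma IsShuffle.lt_iff_lt_rOne (hσ : IsShuffle (r + s) r σ) :
    ∀ i < r, ap σ i < n₁ ↔ i < rOne r s n₁ σ := by
  obtain ⟨t, ht, h⟩ := exists_lt_iff_lt_of_monotoneOn ((isShuffle_iff rfl).1 hσ).1.monotoneOn n₁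
  rwa [rOne_eq_of_forall_lt_iff σ ht h]

lemma IsShuffle.lt_iff_lt_sOne (hσ : IsShuffle (r + s) r σ) :
    ∀ j < s, ap σ (r + j) < n₁ ↔ j < sOne r s n₁ σ := by
  obtain ⟨t, ht, h⟩ := exists_lt_iff_lt_of_monotoneOn ((isShuffle_iff rfl).1 hσ).2.monotoneOn n₁
  rwa [sOne_eq_of_forall_lt_iff σ ht h]

end counts

lemma matches_iff {r s n₁ n₂ a b : ℕ} {σ : Equiv.Perm (Fin (r + s))}
    {σ₁ : Equiv.Perm (Fin n₁)} {σ₂ : Equiv.Perm (Fin n₂)} :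
    Matches r s n₁ n₂ a b σ σ₁ σ₂ ↔
      EqOn (ap σ₁) (blockJoin a (ap σ) fun j => ap σ (r + j)) (Iio (a + b)) ∧
      EqOn (ap σ₂) (blockJoin (r - a) (fun i => ap σ (a + i) - n₁)
        fun j => ap σ (r + b + j) - n₁) (Iio (r - a + (s - b))) := by
  rw [eqOn_blockJoin_iff, eqOn_blockJoin_iff]
  exact and_assoc.symm

theorem IsShuffle.exists_isShuffle_restrict {r s a b p q c m : ℕ} {σ : Equiv.Perm (Fin (r + s))}
    (hσ : IsShuffle (r + s) r σ) (hm : a + b = m) (ha : p + a ≤ r) (hb : q + b ≤ s)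
    (hval₁ : ∀ i < a, ap σ (p + i) ∈ Ico c (c + m))
    (hval₂ : ∀ j < b, ap σ (r + q + j) ∈ Ico c (c + m)) :
    ∃ τ : Equiv.Perm (Fin m), IsShuffle m a τ ∧
      EqOn (ap τ) (blockJoin a (fun i => ap σ (p + i) - c) fun j => ap σ (r + q + j) - c)
        (Iio (a + b)) := by
  subst hm
  obtain ⟨hu, hv⟩ := (isShuffle_iff rfl).1 hσ
  have hinj : ∀ x < r + s, ∀ y < r + s, c ≤ ap σ x → c ≤ ap σ y →
      ap σ x - c = ap σ y - c → x = y := fun x hx y hy hcx hcy hxy =>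
    (ap_bijOn σ).injOn hx hy (by omega)
  have hmaps : MapsTo (blockJoin a (fun i => ap σ (p + i) - c) fun j => ap σ (r + q + j) - c)
      (Iio (a + b)) (Iio (a + b)) := by
    intro k hk
    simp only [blockJoin, mem_Iio] at hk ⊢
    split_ifs with hka
    · have := hval₁ k hka; simp only [mem_Ico] at this; omega
    · have := hval₂ (k - a) (by omega); simp only [mem_Ico] at this; omega
  have hinjOn : InjOn (blockJoin a (fun i => ap σ (p + i) - c) fun j => ap σ (r + q + j) - c)
      (Iio (a + b)) := by
    intro x hx y hy hxy
    simp only [blockJoin, mem_Iio] at hx hy hxy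
    split_ifs at hxy with hxa hya hya
    · have := hinj _ (by omega) _ (by omega) (hval₁ x hxa).1 (hval₁ y hya).1 hxy; omega
    · have := hinj _ (by omega) _ (by omega) (hval₁ x hxa).1 (hval₂ _ (by omega)).1 hxy; omega
    · have := hinj _ (by omega) _ (by omega) (hval₂ _ (by omega)).1 (hval₁ y hya).1 hxy; omega
    · have := hinj _ (by omega) _ (by omega) (hval₂ _ (by omega)).1 (hval₂ _ (by omega)).1 hxy
      omega
  obtain ⟨τ, hτ⟩ :=
    exists_perm_eqOn_ap (((finite_Iio _).injOn_iff_bijOn_of_mapsTo hmaps).1 hinjOn)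
  refine ⟨τ, (isShuffle_iff rfl).2 ⟨fun i hi j hj hij => ?_, fun i hi j hj hij => ?_⟩, hτ⟩
  · simp only [mem_Iio] at hi hj
    rw [hτ (show i < a + b by omega), hτ (show j < a + b by omega), blockJoin_of_lt hi,
      blockJoin_of_lt hj]
    have := hu (show p + i < r by omega) (show p + j < r by omega) (by omega)
    have := (hval₁ i hi).1
    omega
  · simp only [mem_Iio] at hi hj ⊢
    rw [hτ (show a + i < a + b by omega), hτ (show a + j < a + b by omega), blockJoin_add,
      blockJoin_add]
    have : ap σ (r + (q + i)) < ap σ (r + (q + j)) :=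
      hv (show q + i < s by omega) (show q + j < s by omega) (by omega)
    have := (hval₂ i hi).1
    simp only [add_assoc] at *
    omega

theorem IsShuffle.existsUnique_split {r s n₁ n₂ : ℕ} {σ : Equiv.Perm (Fin (r + s))}
    (hσ : IsShuffle (r + s) r σ) (h : n₁ + n₂ = r + s) :
    ∃! p : Equiv.Perm (Fin n₁) × Equiv.Perm (Fin n₂),
      IsShuffle n₁ (rOne r s n₁ σ) p.1 ∧ IsShuffle n₂ (r - rOne r s n₁ σ) p.2 ∧
      Matches r s n₁ n₂ (rOne r s n₁ σ) (sOne r s n₁ σ) σ p.1 p.2 := by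
  have ha := rOne_le (n₁ := n₁) σ
  have hb := sOne_le (n₁ := n₁) σ
  have hab := rOne_add_sOne σ (show n₁ ≤ r + s by omega)
  have h₁ := hσ.lt_iff_lt_rOne (n₁ := n₁)
  have h₂ := hσ.lt_iff_lt_sOne (n₁ := n₁)
  generalize rOne r s n₁ σ = a at *
  generalize sOne r s n₁ σ = b at *
  have hn₂ : r - a + (s - b) = n₂ := by omega
  obtain ⟨σ₁, hσ₁, e₁⟩ :=
    hσ.exists_isShuffle_restrict (p := 0) (q := 0) (c := 0) hab (by omega) (by omega)
    (fun i hi => ⟨Nat.zero_le _, by simpa using (h₁ i (by omega)).2 hi⟩)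
    (fun j hj => ⟨Nat.zero_le _, by simpa using (h₂ j (by omega)).2 hj⟩)
  obtain ⟨σ₂, hσ₂, e₂⟩ :=
    hσ.exists_isShuffle_restrict (p := a) (q := b) (c := n₁) hn₂ (by omega) (by omega)
    (fun i hi => ⟨not_lt.1 fun hlt => by have := (h₁ (a + i) (by omega)).1 hlt; omega,
      by have := ap_lt σ (show a + i < r + s by omega); omega⟩)
    (fun j hj => ⟨not_lt.1 fun hlt => by
        have := (h₂ (b + j) (by omega)).1 (by rwa [← add_assoc]); omega,
      by have := ap_lt σ (show r + b + j < r + s by omega); omega⟩)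
  simp only [zero_add, add_zero, tsub_zero] at e₁
  refine ⟨(σ₁, σ₂), ⟨hσ₁, hσ₂, matches_iff.2 ⟨e₁, e₂⟩⟩, ?_⟩
  rintro ⟨τ₁, τ₂⟩ ⟨-, -, hm⟩
  obtain ⟨m₁, m₂⟩ := matches_iff.1 hm
  rw [hab] at m₁ e₁
  rw [hn₂] at m₂ e₂
  exact Prod.ext (perm_eq_of_eqOn_ap _ (m₁.trans e₁.symm))
    (perm_eq_of_eqOn_ap _ (m₂.trans e₂.symm))

def mergeBlocks (r a b c : ℕ) (f g : ℕ → ℕ) : ℕ → ℕ :=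
  blockJoin r (blockJoin a f fun i => c + g i)
    (blockJoin b (fun j => f (a + j)) fun j => c + g (r - a + j))

theorem IsShuffle.eqOn_mergeBlocks {r s n₁ n₂ a b : ℕ} {σ : Equiv.Perm (Fin (r + s))}
    {σ₁ : Equiv.Perm (Fin n₁)} {σ₂ : Equiv.Perm (Fin n₂)} (hσ : IsShuffle (r + s) r σ)
    (ha : rOne r s n₁ σ = a) (hb : sOne r s n₁ σ = b) (hm : Matches r s n₁ n₂ a b σ σ₁ σ₂) :
    EqOn (ap σ) (mergeBlocks r a b n₁ (ap σ₁) (ap σ₂)) (Iio (r + s)) := by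
  obtain ⟨m₁, m₂, m₃, m₄⟩ := hm
  have h₁ := hσ.lt_iff_lt_rOne (n₁ := n₁)
  have h₂ := hσ.lt_iff_lt_sOne (n₁ := n₁)
  rw [ha] at h₁
  rw [hb] at h₂
  intro k hk
  simp only [mem_Iio] at hk
  simp only [mergeBlocks, blockJoin]
  split_ifs with hkr hka hkb
  · exact (m₁ k hka).symm
  · have := m₃ (k - a) (by omega)
    have := (h₁ k hkr).not.2 hka
    rw [Nat.add_sub_cancel' (not_lt.1 hka)] at *
    omega
  · rw [m₂ _ hkb, Nat.add_sub_cancel' (not_lt.1 hkr)]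
  · have := m₄ (k - r - b) (by omega)
    have := (h₂ (k - r) (by omega)).not.2 hkb
    rw [Nat.add_sub_cancel' (not_lt.1 hkr), add_assoc, Nat.add_sub_cancel' (not_lt.1 hkb),
      Nat.add_sub_cancel' (not_lt.1 hkr)] at *
    omega

theorem bijOn_mergeBlocks {r s n₁ n₂ a b : ℕ} (h : n₁ + n₂ = r + s) (har : a ≤ r)
    (hbs : b ≤ s) (hab : a + b = n₁) (σ₁ : Equiv.Perm (Fin n₁)) (σ₂ : Equiv.Perm (Fin n₂)) :
    BijOn (mergeBlocks r a b n₁ (ap σ₁) (ap σ₂)) (Iio (r + s)) (Iio (r + s)) := by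
  refine ((finite_Iio _).surjOn_iff_bijOn_of_mapsTo fun k hk => ?_).1 fun y hy => ?_
  · simp only [mem_Iio] at hk ⊢
    simp only [mergeBlocks, blockJoin]
    split_ifs with hkr hka hkb
    · have := ap_lt σ₁ (show k < n₁ by omega); omega
    · have := ap_lt σ₂ (show k - a < n₂ by omega); omega
    · have := ap_lt σ₁ (show a + (k - r) < n₁ by omega); omega
    · have := ap_lt σ₂ (show r - a + (k - r - b) < n₂ by omega); omega
  simp only [mem_Iio] at hy
  by_cases hyn : y < n₁
  · obtain ⟨x, hx, rfl⟩ := (ap_bijOn σ₁).surjOn hyn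
    simp only [mem_Iio] at hx
    by_cases hxa : x < a
    · refine ⟨x, by simp only [mem_Iio]; omega, ?_⟩
      simp [mergeBlocks, blockJoin, hxa, show x < r by omega]
    · refine ⟨r + (x - a), by simp only [mem_Iio]; omega, ?_⟩
      simp [mergeBlocks, blockJoin, show x - a < b by omega, Nat.add_sub_cancel' (not_lt.1 hxa)]
  · obtain ⟨x, hx, hxy⟩ := (ap_bijOn σ₂).surjOn (show y - n₁ < n₂ by omega)
    simp only [mem_Iio] at hx
    by_cases hxa : x < r - a
    · refine ⟨a + x, by simp only [mem_Iio]; omega, ?_⟩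
      simp [mergeBlocks, blockJoin, show a + x < r by omega, hxy]
      omega
    · refine ⟨r + b + (x - (r - a)), by simp only [mem_Iio]; omega, ?_⟩
      simp [mergeBlocks, blockJoin, add_assoc, Nat.add_sub_cancel' (not_lt.1 hxa), hxy]
      omega

theorem isShuffle_and_matches_of_eqOn_mergeBlocks {r s n₁ n₂ a b : ℕ} (h : n₁ + n₂ = r + s)
    (har : a ≤ r) (hbs : b ≤ s) (hab : a + b = n₁) {σ : Equiv.Perm (Fin (r + s))}
    {σ₁ : Equiv.Perm (Fin n₁)} {σ₂ : Equiv.Perm (Fin n₂)} (hσ₁ : IsShuffle n₁ a σ₁)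
    (hσ₂ : IsShuffle n₂ (r - a) σ₂)
    (hσ : EqOn (ap σ) (mergeBlocks r a b n₁ (ap σ₁) (ap σ₂)) (Iio (r + s))) :
    IsShuffle (r + s) r σ ∧ rOne r s n₁ σ = a ∧ sOne r s n₁ σ = b ∧
      Matches r s n₁ n₂ a b σ σ₁ σ₂ := by
  obtain ⟨hσr, hσs⟩ := eqOn_blockJoin_iff.1 hσ
  simp only [EqOn, mem_Iio] at hσr hσs
  obtain ⟨u₁, v₁⟩ := (isShuffle_iff hab).1 hσ₁
  obtain ⟨u₂, v₂⟩ := (isShuffle_iff (show r - a + (s - b) = n₂ by omega)).1 hσ₂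
  refine ⟨(isShuffle_iff rfl).2 ⟨?_, ?_⟩, rOne_eq_of_forall_lt_iff σ har fun i hi => ?_,
    sOne_eq_of_forall_lt_iff σ hbs fun j hj => ?_, fun i hi => ?_, fun j hj => ?_,
    fun i hi => ?_, fun j hj => ?_⟩
  · have := strictMonoOn_blockJoin u₁ (fun i hi j hj hij => Nat.add_lt_add_left (u₂ hi hj hij) n₁)
      fun i hi j _ => by have := ap_lt σ₁ (show i < n₁ by omega); omega
    rw [Nat.add_sub_cancel' har] at this
    exact this.congr fun i hi => (hσr hi).symm
  · have := strictMonoOn_blockJoin v₁ (fun i hi j hj hij => Nat.add_lt_add_left (v₂ hi hj hij) n₁)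
      fun i hi j _ => by have := ap_lt σ₁ (show a + i < n₁ by omega); omega
    rw [Nat.add_sub_cancel' hbs] at this
    exact this.congr fun j hj => (hσs hj).symm
  · rw [hσr hi, blockJoin]
    split_ifs with hia
    · simpa [hia] using ap_lt σ₁ (show i < n₁ by omega)
    · simp [hia]
  · rw [hσs hj, blockJoin]
    split_ifs with hjb
    · simpa [hjb] using ap_lt σ₁ (show a + j < n₁ by omega)
    · simp [hjb]
  · rw [hσr (show i < r by omega), blockJoin_of_lt hi]
  · rw [hσs (show j < s by omega), blockJoin_of_lt hj]
  · rw [hσr (show a + i < r by omega), blockJoin_add]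
    omega
  · rw [add_assoc, hσs (show b + j < s by omega), blockJoin_add]
    omega

theorem existsUnique_isShuffle_matches {r s n₁ n₂ a b : ℕ} (h : n₁ + n₂ = r + s) (har : a ≤ r)
    (hbs : b ≤ s) (hab : a + b = n₁) {σ₁ : Equiv.Perm (Fin n₁)} {σ₂ : Equiv.Perm (Fin n₂)}
    (hσ₁ : IsShuffle n₁ a σ₁) (hσ₂ : IsShuffle n₂ (r - a) σ₂) :
    ∃! σ : Equiv.Perm (Fin (r + s)),
      IsShuffle (r + s) r σ ∧ rOne r s n₁ σ = a ∧ sOne r s n₁ σ = b ∧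
        Matches r s n₁ n₂ a b σ σ₁ σ₂ := by
  obtain ⟨σ, hσ⟩ := exists_perm_eqOn_ap (bijOn_mergeBlocks h har hbs hab σ₁ σ₂)
  refine ⟨σ, isShuffle_and_matches_of_eqOn_mergeBlocks h har hbs hab hσ₁ hσ₂ hσ, ?_⟩
  rintro τ ⟨hτ, hτa, hτb, hτm⟩
  exact perm_eq_of_eqOn_ap τ ((hτ.eqOn_mergeBlocks hτa hτb hτm).trans hσ.symm)

/-- for `n = r+s = n₁+n₂` and `σ ∈ Sh_{r,s}`, setting
`r₁ = #{i < r : σ(i) < n₁}` and `s₁ = #{i ≥ r : σ(i) < n₁}`: (a) `r₁ + s₁ = n₁`;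
(b) the indices of the first (resp. second) block sent below `n₁` form the initial
segments `{0,…,r₁-1}` (resp. `{r,…,r+s₁-1}`); (c) there is a unique pair
`(σ₁, σ₂)` with `σ₁` an `(r₁,s₁)`-shuffle, `σ₂` an `(r−r₁,s−s₁)`-shuffle
satisfying the defining value equations; (d) conversely, for every admissible
datum `(a, σ₁, σ₂)` there is a unique `σ ∈ Sh_{r,s}` inducing it, so
`σ ↦ (r₁, σ₁, σ₂)` is a bijection from `Sh_{r,s}` onto
`⨿_{r₁+s₁=n₁} Sh_{r₁,s₁} × Sh_{r−r₁,s−s₁}`. -/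
theorem shuffle_deconcatenation_bijection (r s n₁ n₂ : ℕ) (h : n₁ + n₂ = r + s) :
    (∀ σ : Equiv.Perm (Fin (r + s)), IsShuffle (r + s) r σ →
      -- (a)
      rOne r s n₁ σ + sOne r s n₁ σ = n₁ ∧
      -- (b)
      (∀ i : Fin (r + s), (i : ℕ) < r →
        ((σ i : ℕ) < n₁ ↔ (i : ℕ) < rOne r s n₁ σ)) ∧
      (∀ i : Fin (r + s), r ≤ (i : ℕ) →
        ((σ i : ℕ) < n₁ ↔ (i : ℕ) < r + sOne r s n₁ σ)) ∧
      -- (c)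
      (∃! p : Equiv.Perm (Fin n₁) × Equiv.Perm (Fin n₂),
        IsShuffle n₁ (rOne r s n₁ σ) p.1 ∧
        IsShuffle n₂ (r - rOne r s n₁ σ) p.2 ∧
        Matches r s n₁ n₂ (rOne r s n₁ σ) (sOne r s n₁ σ) σ p.1 p.2)) ∧
    -- (d)
    (∀ a b : ℕ, a ≤ r → b ≤ s → a + b = n₁ →
      ∀ (σ₁ : Equiv.Perm (Fin n₁)) (σ₂ : Equiv.Perm (Fin n₂)),
        IsShuffle n₁ a σ₁ → IsShuffle n₂ (r - a) σ₂ →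
        ∃! σ : Equiv.Perm (Fin (r + s)),
          IsShuffle (r + s) r σ ∧ rOne r s n₁ σ = a ∧ sOne r s n₁ σ = b ∧
          Matches r s n₁ n₂ a b σ σ₁ σ₂) := by
  refine ⟨fun σ hσ => ⟨rOne_add_sOne σ (by omega), fun i hi => ?_, fun i hi => ?_,
    hσ.existsUnique_split h⟩, fun a b har hbs hab σ₁ σ₂ hσ₁ hσ₂ =>
      existsUnique_isShuffle_matches h har hbs hab hσ₁ hσ₂⟩
  · simpa using hσ.lt_iff_lt_rOne (n₁ := n₁) i hi
  · have := hσ.lt_iff_lt_sOne (n₁ := n₁) (i - r) (by omega)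
    rw [Nat.add_sub_cancel' hi, ap_val] at this
    exact this.trans (by omega)
end

section
/- Let k be a commutative ring, X a set, and c : X × X → k an arbitrary function. For r, s ≥ 0 and functions φ : X^r → k, ψ : X^s → k, define φ *_c ψ : X^{r+s} → k by (φ *_c ψ)(t₁,…,t_{r+s}) = Σ_{σ ∈ Sh_{r,s}} [∏_{i<j, σ(i)>σ(j)} c(t_{σ(i)}, t_{σ(j)})] · φ(t_{σ(1)},…,t_{σ(r)}) · ψ(t_{σ(r+1)},…,t_{σ(r+s)}). Then this shuffle product is associative: for all r, s, t ≥ 0 and all φ : X^r → k, ψ : X^s → k, χ : X^t → k one has (φ *_c ψ) *_c χ = φ *_c (ψ *_c χ) as functions on X^{r+s+t}. Consequently the graded vector space ⊕_{n≥0} Map(X^n, k) is an associative k-algebra under *_c (the function model of the Feigin–Odesskii shuffle algebra). -/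
instance {n r : ℕ} : DecidablePred (IsShuffle n r) := fun _ => by
  unfold IsShuffle; infer_instance

/-- The shuffle product `φ *_c ψ` of functions `φ : X^r → k`, `ψ : X^s → k` with
kernel `c : X × X → k`:
`(φ *_c ψ)(t) = Σ_{σ ∈ Sh_{r,s}} [∏_{i<j, σ(i)>σ(j)} c(t_{σ(i)}, t_{σ(j)})] ·
φ(t_{σ(1)},…,t_{σ(r)}) · ψ(t_{σ(r+1)},…,t_{σ(r+s)})`. -/
def shuffleMul {k X : Type*} [CommRing k] (c : X → X → k) {r s : ℕ}
    (φ : (Fin r → X) → k) (ψ : (Fin s → X) → k) : (Fin (r + s) → X) → k :=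
  fun t =>
    ∑ σ ∈ Finset.univ.filter (IsShuffle (r + s) r),
      (∏ p ∈ Finset.univ.filter
          (fun p : Fin (r + s) × Fin (r + s) => p.1 < p.2 ∧ σ p.2 < σ p.1),
        c (t (σ p.1)) (t (σ p.2))) *
      φ (fun i => t (σ (Fin.castAdd s i))) * ψ (fun j => t (σ (Fin.natAdd r j)))

open Equiv Equiv.Perm Finset

theorem StrictMono.strictMono_comp_iff {α β γ : Type*} [Preorder α] [LinearOrder β]
    [Preorder γ] {g : β → γ} (hg : StrictMono g) {f : α → β} :
    StrictMono (g ∘ f) ↔ StrictMono f :=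
  ⟨fun h _ _ hab => hg.lt_iff_lt.mp (h hab), hg.comp⟩

theorem Tuple.sort_eq_of_strictMono {α : Type*} [LinearOrder α] {n : ℕ} {f : Fin n → α}
    {π : Perm (Fin n)} (h : StrictMono (f ∘ π)) : Tuple.sort f = π :=
  (Tuple.eq_sort_iff.mpr ⟨h.monotone, fun _ _ hij heq => absurd heq (h hij).ne⟩).symm

theorem Equiv.Perm.strictMono_iff_eq_one {n : ℕ} {π : Perm (Fin n)} : StrictMono π ↔ π = 1 :=
  ⟨fun h => π.monotone_iff.mp h.monotone, fun h => h ▸ strictMono_id⟩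

namespace Equiv.Perm

def finAddCongr {a b : ℕ} (τ₁ : Perm (Fin a)) (τ₂ : Perm (Fin b)) : Perm (Fin (a + b)) :=
  finSumFinEquiv.permCongr (τ₁.sumCongr τ₂)

variable {a b : ℕ} (τ₁ : Perm (Fin a)) (τ₂ : Perm (Fin b))

@[simp] theorem finAddCongr_castAdd (i : Fin a) :
    finAddCongr τ₁ τ₂ (Fin.castAdd b i) = Fin.castAdd b (τ₁ i) := by
  simp [finAddCongr, permCongr_apply]

@[simp] theorem finAddCongr_natAdd (j : Fin b) :
    finAddCongr τ₁ τ₂ (Fin.natAdd a j) = Fin.natAdd a (τ₂ j) := by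
  simp [finAddCongr, permCongr_apply]

@[simp] theorem finAddCongr_symm : (finAddCongr τ₁ τ₂).symm = finAddCongr τ₁⁻¹ τ₂⁻¹ :=
  rfl

theorem finAddCongr_trans_comp_castAdd (σ : Perm (Fin (a + b))) :
    ⇑((finAddCongr τ₁ τ₂).trans σ) ∘ Fin.castAdd b = (σ ∘ Fin.castAdd b) ∘ τ₁ := by
  ext i; simp

theorem finAddCongr_trans_comp_natAdd (σ : Perm (Fin (a + b))) :
    ⇑((finAddCongr τ₁ τ₂).trans σ) ∘ Fin.natAdd a = (σ ∘ Fin.natAdd a) ∘ τ₂ := by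
  ext i; simp

end Equiv.Perm

theorem isShuffle_add_iff {a b : ℕ} {σ : Perm (Fin (a + b))} :
    IsShuffle (a + b) a σ ↔ StrictMono (σ ∘ Fin.castAdd b) ∧ StrictMono (σ ∘ Fin.natAdd a) := by
  refine ⟨fun h => ⟨fun i j hij => h _ _ (Fin.strictMono_castAdd b hij) (Or.inl (by simp)),
    fun i j hij => h _ _ (Fin.strictMono_natAdd a hij) (Or.inr (by simp))⟩, ?_⟩
  rintro ⟨h₁, h₂⟩ i j hij hblock
  induction i using Fin.addCases with
  | left i =>
    induction j using Fin.addCases with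
    | left j => exact h₁ ((Fin.strictMono_castAdd b).lt_iff_lt.mp hij)
    | right j => simp at hblock; omega
  | right i =>
    induction j using Fin.addCases with
    | left j => simp [Fin.lt_def] at hij; omega
    | right j => exact h₂ ((Fin.natAdd_lt_natAdd_iff a).mp hij)

section Factorization

variable {a b : ℕ}

def blockFactor (ρ : Perm (Fin (a + b))) : Perm (Fin a) × Perm (Fin b) :=
  ((Tuple.sort (ρ ∘ Fin.castAdd b))⁻¹, (Tuple.sort (ρ ∘ Fin.natAdd a))⁻¹)

def shuffleFactor (ρ : Perm (Fin (a + b))) : Perm (Fin (a + b)) :=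
  (finAddCongr (blockFactor ρ).1 (blockFactor ρ).2).symm.trans ρ

theorem finAddCongr_trans_shuffleFactor (ρ : Perm (Fin (a + b))) :
    (finAddCongr (blockFactor ρ).1 (blockFactor ρ).2).trans (shuffleFactor ρ) = ρ := by
  rw [shuffleFactor, ← trans_assoc, self_trans_symm, refl_trans]

theorem isShuffle_shuffleFactor (ρ : Perm (Fin (a + b))) :
    IsShuffle (a + b) a (shuffleFactor ρ) := by
  have sorted {m : ℕ} (g : Fin m → Fin (a + b)) (hg : Function.Injective g) :
      StrictMono (g ∘ Tuple.sort g) :=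
    (Tuple.monotone_sort g).strictMono_of_injective (hg.comp (Equiv.injective _))
  rw [isShuffle_add_iff]
  constructor
  · convert sorted _ (ρ.injective.comp (Fin.castAdd_injective a b)) using 1
    ext i; simp [shuffleFactor, blockFactor]
  · convert sorted _ (ρ.injective.comp (Fin.natAdd_injective b a)) using 1
    ext i; simp [shuffleFactor, blockFactor]

theorem blockFactor_finAddCongr_trans {σ : Perm (Fin (a + b))} (hσ : IsShuffle (a + b) a σ)
    (τ₁ : Perm (Fin a)) (τ₂ : Perm (Fin b)) :
    blockFactor ((finAddCongr τ₁ τ₂).trans σ) = (τ₁, τ₂) := by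
  obtain ⟨h₁, h₂⟩ := isShuffle_add_iff.mp hσ
  simp only [blockFactor, Prod.ext_iff, inv_eq_iff_eq_inv]
  constructor <;> apply Tuple.sort_eq_of_strictMono
  · convert h₁ using 1; ext i; simp
  · convert h₂ using 1; ext i; simp

theorem shuffleFactor_finAddCongr_trans {σ : Perm (Fin (a + b))} (hσ : IsShuffle (a + b) a σ)
    (τ₁ : Perm (Fin a)) (τ₂ : Perm (Fin b)) :
    shuffleFactor ((finAddCongr τ₁ τ₂).trans σ) = σ := by
  rw [shuffleFactor, blockFactor_finAddCongr_trans hσ, ← trans_assoc, symm_trans_self, refl_trans]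

theorem sum_finAddCongr_trans {M : Type*} [AddCommMonoid M]
    (S₁ : Finset (Perm (Fin a))) (S₂ : Finset (Perm (Fin b))) (T : Finset (Perm (Fin (a + b))))
    (hT : ∀ σ, IsShuffle (a + b) a σ → ∀ τ₁ τ₂,
      (finAddCongr τ₁ τ₂).trans σ ∈ T ↔ τ₁ ∈ S₁ ∧ τ₂ ∈ S₂)
    (F : Perm (Fin (a + b)) → M) :
    ∑ σ ∈ univ.filter (IsShuffle (a + b) a), ∑ τ₁ ∈ S₁, ∑ τ₂ ∈ S₂,
      F ((finAddCongr τ₁ τ₂).trans σ) = ∑ ρ ∈ T, F ρ := by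
  simp_rw [← sum_product']
  refine sum_nbij' (fun p => (finAddCongr p.2.1 p.2.2).trans p.1)
    (fun ρ => (shuffleFactor ρ, blockFactor ρ)) ?_ ?_ ?_ ?_ fun _ _ => rfl
  · rintro ⟨σ, τ₁, τ₂⟩ hp
    simp only [mem_product, mem_filter, mem_univ, true_and] at hp
    exact (hT σ hp.1 τ₁ τ₂).mpr hp.2
  · intro ρ hρ
    rw [← finAddCongr_trans_shuffleFactor ρ] at hρ
    simp only [mem_product, mem_filter, mem_univ, true_and]
    exact ⟨isShuffle_shuffleFactor ρ, (hT _ (isShuffle_shuffleFactor ρ) _ _).mp hρ⟩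
  · rintro ⟨σ, τ₁, τ₂⟩ hp
    simp only [mem_product, mem_filter, mem_univ, true_and] at hp
    simp [shuffleFactor_finAddCongr_trans hp.1, blockFactor_finAddCongr_trans hp.1]
  · intro ρ _
    exact finAddCongr_trans_shuffleFactor ρ

end Factorization

section InversionProd

variable {k X α β : Type*} [CommMonoid k] [LinearOrder α] [LinearOrder β] (c : X → X → k)

def inversionProd {m : ℕ} (g : Fin m → α) (t : α → X) : k :=
  ∏ p ∈ univ.filter (fun p : Fin m × Fin m => p.1 < p.2 ∧ g p.2 < g p.1),
    c (t (g p.1)) (t (g p.2))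

theorem inversionProd_eq_prod_prod {m : ℕ} (g : Fin m → α) (t : α → X) :
    inversionProd c g t =
      ∏ i, ∏ j, if i < j ∧ g j < g i then c (t (g i)) (t (g j)) else 1 := by
  rw [inversionProd, prod_filter, ← Fintype.prod_prod_type']

theorem inversionProd_of_strictMono {m : ℕ} {g : Fin m → α} (hg : StrictMono g) (t : α → X) :
    inversionProd c g t = 1 :=
  prod_eq_one fun _ hp => absurd (hg (mem_filter.mp hp).2.1) (mem_filter.mp hp).2.2.asymm

theorem inversionProd_strictMono_comp {m : ℕ} {h : α → β} (hh : StrictMono h) (g : Fin m → α)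
    (t : β → X) : inversionProd c (h ∘ g) t = inversionProd c g (t ∘ h) := by
  simp only [inversionProd, Function.comp_apply, hh.lt_iff_lt]

theorem inversionProd_comp_orderIso {m m' : ℕ} (e : Fin m' ≃o Fin m) (g : Fin m → α)
    (t : α → X) : inversionProd c (g ∘ e) t = inversionProd c g t := by
  simp only [inversionProd_eq_prod_prod, Function.comp_apply]
  refine Fintype.prod_equiv e.toEquiv _ _ fun i => Fintype.prod_equiv e.toEquiv _ _ fun j => ?_
  simp [e.lt_iff_lt]

theorem inversionProd_comp_finCongr {m n : ℕ} (h : m = n) (ρ : Perm (Fin m)) (t : Fin n → X) :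
    inversionProd c ρ (t ∘ finCongr h) = inversionProd c ((finCongr h).permCongr ρ) t :=
  calc inversionProd c ρ (t ∘ finCongr h)
    _ = inversionProd c (finCongr h ∘ ρ) t :=
      (inversionProd_strictMono_comp c (Fin.cast_strictMono h) ρ t).symm
    _ = inversionProd c ((finCongr h).permCongr ρ ∘ Fin.castOrderIso h) t := by
      congr 1
    _ = inversionProd c ((finCongr h).permCongr ρ) t := inversionProd_comp_orderIso c _ _ t

theorem inversionProd_add {a b : ℕ} (g : Fin (a + b) → α) (t : α → X) :
    inversionProd c g t =
      inversionProd c (g ∘ Fin.castAdd b) t * inversionProd c (g ∘ Fin.natAdd a) t *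
        ∏ i : Fin a, ∏ j : Fin b,
          if g (Fin.natAdd a j) < g (Fin.castAdd b i) then
            c (t (g (Fin.castAdd b i))) (t (g (Fin.natAdd a j))) else 1 := by
  have hcn (i : Fin a) (j : Fin b) : Fin.castAdd b i < Fin.natAdd a j := by
    simp [Fin.lt_def]; omega
  simp only [inversionProd_eq_prod_prod, Fin.prod_univ_add, Function.comp_apply,
    (Fin.strictMono_castAdd b).lt_iff_lt, Fin.natAdd_lt_natAdd_iff, hcn, (hcn _ _).not_gt,
    true_and, false_and, if_false, prod_const_one, mul_one, prod_mul_distrib]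
  ac_rfl

/-- The inversions of `ρ = σ ∘ (τ₁ ⊕ τ₂)` are those of `σ`, which all go across the two blocks,
together with those of `τ₁` and `τ₂`, which stay inside a block where `σ` is increasing. -/
theorem inversionProd_finAddCongr_trans {a b : ℕ} {σ : Perm (Fin (a + b))}
    (hσ : IsShuffle (a + b) a σ) (τ₁ : Perm (Fin a)) (τ₂ : Perm (Fin b)) (t : Fin (a + b) → X) :
    inversionProd c ((finAddCongr τ₁ τ₂).trans σ) t =
      inversionProd c σ t * inversionProd c τ₁ (t ∘ σ ∘ Fin.castAdd b) *
        inversionProd c τ₂ (t ∘ σ ∘ Fin.natAdd a) := by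
  obtain ⟨h₁, h₂⟩ := isShuffle_add_iff.mp hσ
  have cross : (∏ i : Fin a, ∏ j : Fin b,
      if ((finAddCongr τ₁ τ₂).trans σ) (Fin.natAdd a j) <
          ((finAddCongr τ₁ τ₂).trans σ) (Fin.castAdd b i) then
        c (t (((finAddCongr τ₁ τ₂).trans σ) (Fin.castAdd b i)))
          (t (((finAddCongr τ₁ τ₂).trans σ) (Fin.natAdd a j))) else 1) =
      ∏ i : Fin a, ∏ j : Fin b, if σ (Fin.natAdd a j) < σ (Fin.castAdd b i) then
        c (t (σ (Fin.castAdd b i))) (t (σ (Fin.natAdd a j))) else 1 :=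
    Fintype.prod_equiv τ₁ _ _ fun i => Fintype.prod_equiv τ₂ _ _ fun j => by simp
  rw [inversionProd_add c ((finAddCongr τ₁ τ₂).trans σ), inversionProd_add c σ, cross,
    finAddCongr_trans_comp_castAdd, finAddCongr_trans_comp_natAdd,
    inversionProd_strictMono_comp c h₁, inversionProd_strictMono_comp c h₂,
    inversionProd_of_strictMono c h₁, inversionProd_of_strictMono c h₂]
  ac_rfl

end InversionProd

theorem shuffleMul_apply {k X : Type*} [CommRing k] (c : X → X → k) {r s : ℕ}
    (φ : (Fin r → X) → k) (ψ : (Fin s → X) → k) (t : Fin (r + s) → X) :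
    shuffleMul c φ ψ t = ∑ σ ∈ univ.filter (IsShuffle (r + s) r),
      inversionProd c σ t * φ (fun i => t (σ (Fin.castAdd s i))) *
        ψ (fun j => t (σ (Fin.natAdd r j))) := rfl

def IsShuffle3 (r s u : ℕ) (ρ : Perm (Fin (r + s + u))) : Prop :=
  StrictMono (ρ ∘ Fin.castAdd u ∘ Fin.castAdd s) ∧ StrictMono (ρ ∘ Fin.castAdd u ∘ Fin.natAdd r) ∧
    StrictMono (ρ ∘ Fin.natAdd (r + s))

instance {r s u : ℕ} : DecidablePred (IsShuffle3 r s u) := fun _ => by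
  unfold IsShuffle3 StrictMono; infer_instance

section ThreeShuffles

variable {r s u : ℕ}

theorem isShuffle3_finAddCongr_trans_iff {σ : Perm (Fin (r + s + u))}
    (hσ : IsShuffle (r + s + u) (r + s) σ) (τ₁ : Perm (Fin (r + s))) (τ₂ : Perm (Fin u)) :
    IsShuffle3 r s u ((finAddCongr τ₁ τ₂).trans σ) ↔ IsShuffle (r + s) r τ₁ ∧ τ₂ = 1 := by
  obtain ⟨h₁, h₂⟩ := isShuffle_add_iff.mp hσ
  set ρ := (finAddCongr τ₁ τ₂).trans σ
  have k₁ : ⇑ρ ∘ Fin.castAdd u ∘ Fin.castAdd s = (σ ∘ Fin.castAdd u) ∘ τ₁ ∘ Fin.castAdd s := by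
    ext i; simp [ρ]
  have k₂ : ⇑ρ ∘ Fin.castAdd u ∘ Fin.natAdd r = (σ ∘ Fin.castAdd u) ∘ τ₁ ∘ Fin.natAdd r := by
    ext i; simp [ρ]
  have k₃ : ⇑ρ ∘ Fin.natAdd (r + s) = (σ ∘ Fin.natAdd (r + s)) ∘ τ₂ := by
    ext i; simp [ρ]
  rw [IsShuffle3, k₁, k₂, k₃, h₁.strictMono_comp_iff, h₁.strictMono_comp_iff,
    h₂.strictMono_comp_iff, isShuffle_add_iff, strictMono_iff_eq_one, and_assoc]

theorem isShuffle3_permCongr_finAddCongr_trans_iff {σ : Perm (Fin (r + (s + u)))}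
    (hσ : IsShuffle (r + (s + u)) r σ) (τ₁ : Perm (Fin r)) (τ₂ : Perm (Fin (s + u))) :
    IsShuffle3 r s u
        ((finCongr (Nat.add_assoc r s u).symm).permCongr ((finAddCongr τ₁ τ₂).trans σ)) ↔
      τ₁ = 1 ∧ IsShuffle (s + u) s τ₂ := by
  obtain ⟨h₁, h₂⟩ := isShuffle_add_iff.mp hσ
  set e := finCongr (Nat.add_assoc r s u).symm
  have he : StrictMono e := Fin.cast_strictMono (Nat.add_assoc r s u).symm
  set ρ := e.permCongr ((finAddCongr τ₁ τ₂).trans σ)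
  have k₁ : ⇑ρ ∘ Fin.castAdd u ∘ Fin.castAdd s = e ∘ (σ ∘ Fin.castAdd (s + u)) ∘ τ₁ := by
    ext i; simp [ρ, e, permCongr_apply, Fin.castAdd_castAdd]
  have k₂ : ⇑ρ ∘ Fin.castAdd u ∘ Fin.natAdd r =
      e ∘ (σ ∘ Fin.natAdd r) ∘ τ₂ ∘ Fin.castAdd u := by
    ext i; simp [ρ, e, permCongr_apply, Fin.castAdd_natAdd]
  have k₃ : ⇑ρ ∘ Fin.natAdd (r + s) = e ∘ (σ ∘ Fin.natAdd r) ∘ τ₂ ∘ Fin.natAdd s := by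
    ext i; simp [ρ, e, permCongr_apply, ← Fin.natAdd_natAdd]
  rw [IsShuffle3, k₁, k₂, k₃, he.strictMono_comp_iff, he.strictMono_comp_iff,
    he.strictMono_comp_iff, h₁.strictMono_comp_iff, h₂.strictMono_comp_iff,
    h₂.strictMono_comp_iff, isShuffle_add_iff, strictMono_iff_eq_one]

end ThreeShuffles

section Assoc

variable {k X : Type*} [CommRing k] (c : X → X → k) {r s u : ℕ}
  (φ : (Fin r → X) → k) (ψ : (Fin s → X) → k) (χ : (Fin u → X) → k)

def shuffleMul3 (t : Fin (r + s + u) → X) : k :=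
  ∑ ρ ∈ univ.filter (IsShuffle3 r s u),
    inversionProd c ρ t * φ (fun i => t (ρ (Fin.castAdd u (Fin.castAdd s i)))) *
      ψ (fun i => t (ρ (Fin.castAdd u (Fin.natAdd r i)))) *
        χ (fun i => t (ρ (Fin.natAdd (r + s) i)))

theorem shuffleMul_shuffleMul_left (t : Fin (r + s + u) → X) :
    shuffleMul c (shuffleMul c φ ψ) χ t = shuffleMul3 c φ ψ χ t := by
  rw [shuffleMul3, ← sum_finAddCongr_trans (univ.filter (IsShuffle (r + s) r)) {1} _
    fun σ hσ τ₁ τ₂ => by simpa using isShuffle3_finAddCongr_trans_iff hσ τ₁ τ₂, shuffleMul_apply]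
  refine sum_congr rfl fun σ hσ => ?_
  rw [shuffleMul_apply, mul_sum, sum_mul]
  refine sum_congr rfl fun τ _ => ?_
  rw [sum_singleton, inversionProd_finAddCongr_trans c (mem_filter.mp hσ).2,
    inversionProd_of_strictMono c (strictMono_iff_eq_one.mpr rfl)]
  simp only [trans_apply, finAddCongr_castAdd, finAddCongr_natAdd, Perm.one_apply,
    Function.comp_def]
  ring

theorem shuffleMul3_comp_finCongr (t : Fin (r + (s + u)) → X) :
    shuffleMul3 c φ ψ χ (t ∘ finCongr (Nat.add_assoc r s u)) =
      ∑ ρ ∈ univ.filter fun ρ =>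
          IsShuffle3 r s u ((finCongr (Nat.add_assoc r s u).symm).permCongr ρ),
        inversionProd c ρ t * φ (fun i => t (ρ (Fin.castAdd (s + u) i))) *
          ψ (fun i => t (ρ (Fin.natAdd r (Fin.castAdd u i)))) *
          χ (fun i => t (ρ (Fin.natAdd r (Fin.natAdd s i)))) := by
  refine (sum_equiv (finCongr (Nat.add_assoc r s u).symm).permCongr (by simp) fun ρ _ => ?_).symm
  rw [← inversionProd_comp_finCongr]
  simp [Function.comp_def, permCongr_apply, Fin.castAdd_castAdd, Fin.castAdd_natAdd,
    ← Fin.natAdd_natAdd]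

theorem shuffleMul_shuffleMul_right (t : Fin (r + (s + u)) → X) :
    shuffleMul c φ (shuffleMul c ψ χ) t =
      shuffleMul3 c φ ψ χ (t ∘ finCongr (Nat.add_assoc r s u)) := by
  rw [shuffleMul3_comp_finCongr, ← sum_finAddCongr_trans {1}
      (univ.filter (IsShuffle (s + u) s)) _
      fun σ hσ τ₁ τ₂ => by simpa using isShuffle3_permCongr_finAddCongr_trans_iff hσ τ₁ τ₂,
    shuffleMul_apply]
  refine sum_congr rfl fun σ hσ => ?_
  rw [shuffleMul_apply, sum_singleton, mul_sum]
  refine sum_congr rfl fun τ _ => ?_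
  rw [inversionProd_finAddCongr_trans c (mem_filter.mp hσ).2,
    inversionProd_of_strictMono c (strictMono_iff_eq_one.mpr rfl)]
  simp only [trans_apply, finAddCongr_castAdd, finAddCongr_natAdd, Perm.one_apply,
    Function.comp_def]
  ring

end Assoc

/-- the shuffle product with an arbitrary kernel `c : X × X → k` is
associative, so `⊕_{n≥0} Map(X^n, k)` is an associative `k`-algebra under `*_c`. -/
theorem shuffleMul_assoc {k X : Type*} [CommRing k] (c : X → X → k)
    {r s u : ℕ} (φ : (Fin r → X) → k) (ψ : (Fin s → X) → k) (χ : (Fin u → X) → k)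
    (t : Fin (r + s + u) → X) :
    shuffleMul c (shuffleMul c φ ψ) χ t =
      shuffleMul c φ (shuffleMul c ψ χ)
        (fun i => t (finCongr (Nat.add_assoc r s u).symm i)) := by
  rw [shuffleMul_shuffleMul_left, shuffleMul_shuffleMul_right]
  exact rfl
end

section
/- Let k be a field, n ≥ 1 and r₁,…,r_n ≥ 1, and let A be the polynomial ring over k in the variables a^{(α)}_i for 1 ≤ α ≤ n and 1 ≤ i ≤ r_α. For 1 ≤ m ≤ r₁ + ⋯ + r_n, let c_m ∈ A be the coefficient of T^m in the product of polynomials ∏_{α=1}^n (1 + a^{(α)}_1 T + a^{(α)}_2 T² + ⋯ + a^{(α)}_{r_α} T^{r_α}) ∈ A[T]. Then A is integral over the k-subalgebra of A generated by c₁,…,c_{r₁+⋯+r_n}. (This is the local model of the proposition that the Witt addition morphism wadd : ∏_i W^{r_i} → W^{r}, given by multiplication of power series with constant term 1, is an integral morphism of schemes.) -/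
/-!
Reversing coefficients (`p(T) ↦ T^r p(1/T)`) turns each factor `1 + a₁T + ⋯ + a_rT^r` into
the monic polynomial `T^r + a₁T^{r-1} + ⋯ + a_r`, and the product into the monic polynomial
whose coefficients are `1, c₁, c₂, …`. The coefficients of a monic factor of a monic polynomial
are integral over the ring generated by the coefficients of the product, so every variable
`a^{(α)}_i` is integral over `k[c₁, c₂, …]`, hence so is all of `A`.
-/

open Polynomial

namespace Polynomial

theorem reflect_prod {R ι : Type*} [CommSemiring R] (s : Finset ι) (f : ι → R[X]) (N : ι → ℕ)
    (hN : ∀ i ∈ s, (f i).natDegree ≤ N i) :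
    reflect (∑ i ∈ s, N i) (∏ i ∈ s, f i) = ∏ i ∈ s, reflect (N i) (f i) := by
  induction s using Finset.cons_induction with
  | empty => simp
  | cons a s _ ih =>
    have hs : (∏ i ∈ s, f i).natDegree ≤ ∑ i ∈ s, N i :=
      (natDegree_prod_le _ _).trans
        (Finset.sum_le_sum fun i hi => hN i (Finset.mem_cons_of_mem hi))
    rw [Finset.prod_cons, Finset.prod_cons, Finset.sum_cons,
      reflect_mul _ _ (hN a (Finset.mem_cons_self a s)) hs,
      ih fun i hi => hN i (Finset.mem_cons_of_mem hi)]

theorem monic_reflect_of_coeff_zero {R : Type*} [Semiring R] {p : R[X]} {N : ℕ}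
    (h0 : p.coeff 0 = 1) (hN : p.natDegree ≤ N) : (reflect N p).Monic :=
  monic_of_natDegree_le_of_coeff_eq_one N (natDegree_reflect_le.trans (max_le le_rfl hN))
    (by rwa [coeff_reflect, revAt_le le_rfl, Nat.sub_self])

theorem coeff_mem_adjoin_coeff_Icc {R S : Type*} [CommSemiring R] [CommSemiring S] [Algebra R S]
    {p : S[X]} {N : ℕ} (h0 : p.coeff 0 = 1) (hN : p.natDegree ≤ N) (m : ℕ) :
    p.coeff m ∈ Algebra.adjoin R (p.coeff '' Set.Icc 1 N) := by
  rcases Nat.eq_zero_or_pos m with rfl | hm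
  · exact h0 ▸ Subalgebra.one_mem _
  by_cases hmN : m ≤ N
  · exact Algebra.subset_adjoin ⟨m, ⟨hm, hmN⟩, rfl⟩
  · rw [coeff_eq_zero_of_natDegree_lt (by omega : p.natDegree < m)]
    exact Subalgebra.zero_mem _

theorem isIntegral_coeff_of_dvd_of_coeff_mem {R S : Type*} [CommRing R] [CommRing S] [Algebra R S]
    (B : Subalgebra R S) {p q : S[X]} (hp : p.Monic) (hpB : ∀ i, p.coeff i ∈ B) (hq : q.Monic)
    (hqp : q ∣ p) (i : ℕ) : IsIntegral B (q.coeff i) := by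
  nontriviality S
  have hlift : p ∈ lifts (algebraMap B S) :=
    (lifts_iff_coeff_lifts p).2 fun i => ⟨⟨p.coeff i, hpB i⟩, rfl⟩
  obtain ⟨p', hp'map, -, hp'⟩ := lifts_and_degree_eq_and_monic hlift hp
  exact isIntegral_coeff_of_dvd p' q hp' hq (hp'map ▸ hqp) i

theorem isIntegral_coeff_factor_adjoin_coeff_prod {R S ι : Type*} [CommRing R] [CommRing S]
    [Algebra R S] {s : Finset ι} {f : ι → S[X]} {N : ι → ℕ} (h0 : ∀ i ∈ s, (f i).coeff 0 = 1)
    (hN : ∀ i ∈ s, (f i).natDegree ≤ N i) {i : ι} (hi : i ∈ s) (j : ℕ) :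
    IsIntegral (Algebra.adjoin R ((∏ i ∈ s, f i).coeff '' Set.Icc 1 (∑ i ∈ s, N i)))
      ((f i).coeff j) := by
  have hprod0 : (∏ i ∈ s, f i).coeff 0 = 1 := by
    rw [coeff_zero_prod]; exact Finset.prod_eq_one h0
  have hprodN : (∏ i ∈ s, f i).natDegree ≤ ∑ i ∈ s, N i :=
    (natDegree_prod_le _ _).trans (Finset.sum_le_sum hN)
  have hdvd : reflect (N i) (f i) ∣ reflect (∑ i ∈ s, N i) (∏ i ∈ s, f i) :=
    reflect_prod s f N hN ▸ Finset.dvd_prod_of_mem _ hi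
  have hcoeff := isIntegral_coeff_of_dvd_of_coeff_mem (Algebra.adjoin R _)
    (monic_reflect_of_coeff_zero hprod0 hprodN)
    (fun m => by rw [coeff_reflect]; exact coeff_mem_adjoin_coeff_Icc hprod0 hprodN _)
    (monic_reflect_of_coeff_zero (h0 i hi) (hN i hi)) hdvd (revAt (N i) j)
  rwa [coeff_reflect, revAt_invol] at hcoeff

end Polynomial

theorem MvPolynomial.isIntegral_of_forall_isIntegral_X {σ R : Type*} [CommRing R]
    (B : Subalgebra R (MvPolynomial σ R)) (hX : ∀ s, IsIntegral B (X s : MvPolynomial σ R))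
    (a : MvPolynomial σ R) : IsIntegral B a := by
  have : Algebra.adjoin R (Set.range X) ≤
      (integralClosure B (MvPolynomial σ R)).restrictScalars R :=
    Algebra.adjoin_le (Set.range_subset_iff.2 hX)
  exact this (adjoin_range_X (R := R) ▸ Algebra.mem_top)

section UnitPoly

variable {R : Type*} [CommSemiring R] {m : ℕ} (x : Fin m → R)

noncomputable def unitPoly : R[X] := 1 + ∑ i : Fin m, C (x i) * X ^ ((i : ℕ) + 1)

theorem unitPoly_coeff_zero : (unitPoly x).coeff 0 = 1 := by
  simp [unitPoly, coeff_one, coeff_X_pow]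

theorem unitPoly_coeff_succ (i : Fin m) : (unitPoly x).coeff ((i : ℕ) + 1) = x i := by
  simp [unitPoly, coeff_one, coeff_C_mul, coeff_X_pow, Fin.val_inj]

theorem unitPoly_natDegree_le : (unitPoly x).natDegree ≤ m := by
  refine (natDegree_add_le _ _).trans (max_le (by simp) ?_)
  exact natDegree_sum_le_of_forall_le _ _ fun i _ => (natDegree_C_mul_X_pow_le _ _).trans i.isLt

end UnitPoly

theorem polynomial_ring_integral_over_product_coefficients_general
    (k : Type*) [Field k] (n : ℕ) (r : Fin n → ℕ)
    (a : MvPolynomial (Σ α : Fin n, Fin (r α)) k) :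
    IsIntegral
      (Algebra.adjoin k
        ((fun m : ℕ =>
            (∏ α : Fin n,
              (1 + ∑ i : Fin (r α),
                Polynomial.C (MvPolynomial.X (⟨α, i⟩ : Σ α : Fin n, Fin (r α))) *
                  Polynomial.X ^ ((i : ℕ) + 1)) :
              Polynomial (MvPolynomial (Σ α : Fin n, Fin (r α)) k)).coeff m) ''
          (Set.Icc 1 (∑ α : Fin n, r α))))
      a := by
  refine MvPolynomial.isIntegral_of_forall_isIntegral_X _ ?_ a
  rintro ⟨α, i⟩
  have := isIntegral_coeff_factor_adjoin_coeff_prod (R := k) (s := Finset.univ) (N := r)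
    (f := fun α => unitPoly fun i => MvPolynomial.X (R := k) (⟨α, i⟩ : Σ α : Fin n, Fin (r α)))
    (fun α _ => unitPoly_coeff_zero _) (fun α _ => unitPoly_natDegree_le _)
    (Finset.mem_univ α) ((i : ℕ) + 1)
  rwa [unitPoly_coeff_succ] at this

/-- let `A` be the polynomial ring in variables `a^{(α)}_i`
(`1 ≤ α ≤ n`, `1 ≤ i ≤ r_α`) and let `c_m` be the coefficient of `T^m` in
`∏_α (1 + a^{(α)}_1 T + ⋯ + a^{(α)}_{r_α} T^{r_α})`.  Then `A` is integral over
the `k`-subalgebra generated by `c₁, …, c_{r₁+⋯+rₙ}`.  (Local model of the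
integrality of the Witt addition morphism.) -/
theorem polynomial_ring_integral_over_product_coefficients
    (k : Type*) [Field k] (n : ℕ) (hn : 1 ≤ n) (r : Fin n → ℕ)
    (hr : ∀ α, 1 ≤ r α) (a : MvPolynomial (Σ α : Fin n, Fin (r α)) k) :
    IsIntegral
      (Algebra.adjoin k
        ((fun m : ℕ =>
            (∏ α : Fin n,
              (1 + ∑ i : Fin (r α),
                Polynomial.C (MvPolynomial.X (⟨α, i⟩ : Σ α : Fin n, Fin (r α))) *
                  Polynomial.X ^ ((i : ℕ) + 1)) :
              Polynomial (MvPolynomial (Σ α : Fin n, Fin (r α)) k)).coeff m) ''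
          (Set.Icc 1 (∑ α : Fin n, r α))))
      a :=
  polynomial_ring_integral_over_product_coefficients_general k n r a
end

section
/- Let k be a field of characteristic zero, let φ : M → N be a functor of orbifolds, let f ∈ F₀(M) and let g ∈ F(N). Then the orbifold direct image φ_* and the inverse image φ^* are adjoint with respect to the orbifold scalar product: (φ_* f, g) = (f, φ^* g), i.e. Σ_{[y]} (φ_* f)(y) · g(y) / |Aut_N(y)| = Σ_{[x]} f(x) · g(φ(x)) / |Aut_M(x)|, where the sums are over isomorphism classes of objects of N and of M respectively (both sums have finitely many nonzero terms). -/
/-! The functor `φ` induces a map `m` on isomorphism classes, and the inner sum at a class `d`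
of `N` only sees the classes `c` of `M` with `m c = d`. On such a term `|Aut d|` cancels and
`g d = g (φ c)`, so the left side is the right side summed fibre by fibre over `m`. -/

open CategoryTheory Function

theorem finsum_fiberwise {α β R : Type*} [AddCommMonoid R] [DecidableEq β] (m : α → β)
    {v : α → R} (hv : HasFiniteSupport v) :
    ∑ᶠ b, ∑ᶠ a, (if m a = b then v a else 0) = ∑ᶠ a, v a := by
  calc ∑ᶠ b, ∑ᶠ a, (if m a = b then v a else 0)
      = ∑ᶠ b, ∑ a ∈ hv.toFinset with m a = b, v a := by
        refine finsum_congr fun b => ?_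
        rw [Finset.sum_filter]
        exact finsum_eq_sum_of_support_subset _ fun a ha =>
          Finset.mem_coe.2 (hv.mem_toFinset.2 fun hva => ha (by simp [hva]))
    _ = ∑ a ∈ hv.toFinset, v a := finsum_sum_filter m _ v
    _ = ∑ᶠ a, v a := (finsum_eq_sum v hv).symm

theorem Quotient.support_comp_out_subset {α R : Type*} [Zero R] {s : Setoid α} (f : α → R) :
    support (fun c : Quotient s => f c.out) ⊆ Quotient.mk s '' support f :=
  fun c hc => ⟨c.out, hc, c.out_eq⟩

namespace CategoryTheory.Functor

variable {C D : Type*} [Category C] [Category D]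

def mapIsoClasses (φ : C ⥤ D) :
    _root_.Quotient (isIsomorphicSetoid C) → _root_.Quotient (isIsomorphicSetoid D) :=
  Quotient.map φ.obj fun _ _ ⟨e⟩ => ⟨φ.mapIso e⟩

theorem nonempty_iso_out_iff_mapIsoClasses_eq (φ : C ⥤ D)
    (c : _root_.Quotient (isIsomorphicSetoid C)) (d : _root_.Quotient (isIsomorphicSetoid D)) :
    Nonempty (φ.obj c.out ≅ d.out) ↔ φ.mapIsoClasses c = d := by
  conv_rhs => rw [← c.out_eq, ← d.out_eq]
  exact (Quotient.eq (r := isIsomorphicSetoid D)).symm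

end CategoryTheory.Functor

open scoped Classical in
/-- for a functor `φ : M → N` of orbifolds (groupoids with finite
automorphism groups), the orbifold direct image `φ_*` and the inverse image `φ^*`
are adjoint for the orbifold scalar product:
`(φ_* f, g) = (f, φ^* g)` for `f ∈ F₀(M)`, `g ∈ F(N)`.  Sums run over isomorphism
classes of objects, realized as the quotient by the `isIsomorphicSetoid`. -/
theorem orbifold_pushforward_pullback_adjoint
    (k : Type*) [Field k] [CharZero k]
    {M N : Type*} [Groupoid M] [Groupoid N]
    [∀ x : M, Finite (Aut x)] [∀ y : N, Finite (Aut y)]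
    (φ : M ⥤ N)
    (f : M → k) (hf : ∀ x y : M, Nonempty (x ≅ y) → f x = f y)
    (hf0 : Set.Finite
      (Quotient.mk (CategoryTheory.isIsomorphicSetoid M) '' {x : M | f x ≠ 0}))
    (g : N → k) (hg : ∀ x y : N, Nonempty (x ≅ y) → g x = g y) :
    ∑ᶠ d : Quotient (CategoryTheory.isIsomorphicSetoid N),
      (∑ᶠ c : Quotient (CategoryTheory.isIsomorphicSetoid M),
          if Nonempty (φ.obj c.out ≅ d.out) then
            f c.out * (Nat.card (Aut d.out) : k) / (Nat.card (Aut c.out) : k)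
          else 0) *
        g d.out / (Nat.card (Aut d.out) : k) =
      ∑ᶠ c : Quotient (CategoryTheory.isIsomorphicSetoid M),
        f c.out * g (φ.obj c.out) / (Nat.card (Aut c.out) : k) := by
  have hv : HasFiniteSupport fun c : Quotient (isIsomorphicSetoid M) =>
      f c.out * g (φ.obj c.out) / (Nat.card (Aut c.out) : k) := by
    refine hf0.subset (Set.Subset.trans ?_ (Quotient.support_comp_out_subset f))
    simp only [mul_div_assoc]
    exact support_mul_subset_left _ _
  rw [← finsum_fiberwise φ.mapIsoClasses hv]
  refine finsum_congr fun d => ?_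
  rw [mul_div_assoc, finsum_mul]
  refine finsum_congr fun c => ?_
  simp only [φ.nonempty_iso_out_iff_mapIsoClasses_eq]
  split_ifs with hcd
  · have hgd : g d.out = g (φ.obj c.out) :=
      hg _ _ ⟨((φ.nonempty_iso_out_iff_mapIsoClasses_eq c d).mpr hcd).some.symm⟩
    have hAut : (Nat.card (Aut d.out) : k) ≠ 0 := Nat.cast_ne_zero.mpr Nat.card_pos.ne'
    rw [hgd]
    field_simp
  · exact zero_mul _
end

section
/- Let r, s ≥ 1 and consider the polynomial ring ℤ[X₁,…,X_r, Y₁,…,Y_s]. For every m ≥ 0, the coefficient of t^m in the polynomial ∏_{i=1}^r ∏_{j=1}^s (1 − X_i Y_j t) ∈ ℤ[X₁,…,X_r,Y₁,…,Y_s][t] lies in the subring of ℤ[X₁,…,X_r,Y₁,…,Y_s] generated by the elementary symmetric polynomials e₁(X),…,e_r(X) in the variables X₁,…,X_r together with the elementary symmetric polynomials e₁(Y),…,e_s(Y) in the variables Y₁,…,Y_s. (This is the assertion that the rule (∏_i(1−λ_i t)) ⊠ (∏_j(1−μ_j t)) = ∏_{i,j}(1−λ_iμ_j t) defines the Witt multiplication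 as a morphism of schemes W^{≤r} × W^{≤s} → W^{≤rs} on the coefficient spaces of polynomials with constant term 1.) -/
/-!
The product `∏ i j, (1 - X i * Y j * t)` is unchanged when the `X`'s are permuted and, separately,
the `Y`'s are permuted, hence so is each of its coefficients. Viewed in `(ℤ[Y])[X]`, such a
coefficient is symmetric in the `X`'s with coefficients symmetric in the `Y`'s. The fundamental
theorem of symmetric polynomials over the ring of symmetric polynomials in the `Y`'s writes it as
a polynomial in the `e_k(X)` whose coefficients are symmetric in the `Y`'s, and these are in turn
polynomials in the `e_k(Y)`.
-/

open MvPolynomial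

namespace MvPolynomial

variable {R : Type*} [CommRing R] {σ τ : Type*}

theorem mem_adjoin_esymm_of_isSymmetric [Fintype σ] {n : ℕ} (hn : Fintype.card σ ≤ n)
    {p : MvPolynomial σ R} (hp : p.IsSymmetric) :
    p ∈ Algebra.adjoin R (Set.range fun k : Fin n => esymm σ R (k + 1)) := by
  obtain ⟨g, hg⟩ := esymmAlgHom_surjective (σ := σ) R hn ⟨p, hp⟩
  rw [← aeval_range]
  exact ⟨g, by simpa [esymmAlgHom_apply] using congrArg Subtype.val hg⟩

theorem mem_adjoin_C_union_esymm_of_isSymmetric {A : Type*} [CommRing A] [Algebra R A]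
    [Fintype σ] {n : ℕ} (hn : Fintype.card σ ≤ n) (A₀ : Subalgebra R A)
    {p : MvPolynomial σ A} (hp : p.IsSymmetric) (hA₀ : ∀ d, p.coeff d ∈ A₀) :
    p ∈ Algebra.adjoin R
      (C '' (A₀ : Set A) ∪ Set.range fun k : Fin n => esymm σ A (k + 1)) := by
  obtain ⟨q, rfl⟩ : p ∈ Set.range (map A₀.val.toRingHom) := by
    rw [mem_range_map_iff_coeffs_subset]
    intro a ha
    obtain ⟨d, -, rfl⟩ := mem_coeffs_iff.mp ha
    simpa using hA₀ d
  have hq : q.IsSymmetric := fun e =>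
    map_injective A₀.val.toRingHom Subtype.val_injective (by rw [map_rename, hp e])
  obtain ⟨g, hg⟩ := esymmAlgHom_surjective (σ := σ) A₀ hn ⟨q, hq⟩
  have hgq : aeval (fun k : Fin n => esymm σ A₀ (k + 1)) g = q := by
    rw [← esymmAlgHom_apply, hg]
  rw [← hgq, map_aeval, coe_eval₂Hom]
  apply eval₂_mem
  · intro d _
    exact Algebra.subset_adjoin (Or.inl (by simp))
  · intro k
    exact Algebra.subset_adjoin (Or.inr ⟨k, by rw [map_esymm]⟩)

theorem sumAlgEquiv_rename_sumMap_id {σ' : Type*} (f : σ → σ')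
    (p : MvPolynomial (σ ⊕ τ) R) :
    sumAlgEquiv R σ' τ (rename (Sum.map f id) p) = rename f (sumAlgEquiv R σ τ p) := by
  induction p using MvPolynomial.induction_on with
  | C a => simp
  | add p q hp hq => simp only [map_add, hp, hq]
  | mul_X p i hp => cases i <;> simp [hp]

theorem sumAlgEquiv_rename_id_sumMap {τ' : Type*} (g : τ → τ')
    (p : MvPolynomial (σ ⊕ τ) R) :
    sumAlgEquiv R σ τ' (rename (Sum.map id g) p) =
      map (rename g).toRingHom (sumAlgEquiv R σ τ p) := by
  induction p using MvPolynomial.induction_on with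
  | C a => simp
  | add p q hp hq => simp only [map_add, hp, hq]
  | mul_X p i hp => cases i <;> simp [hp]

theorem sumAlgEquiv_symm_C (a : MvPolynomial τ R) :
    (sumAlgEquiv R σ τ).symm (C a) = rename Sum.inr a :=
  (AlgEquiv.symm_apply_eq _).mpr
    (by simpa using (AlgHom.congr_fun (sumAlgEquiv_comp_rename_inr R σ τ) a).symm)

theorem sumAlgEquiv_symm_esymm [Fintype σ] (k : ℕ) :
    (sumAlgEquiv R σ τ).symm (esymm σ (MvPolynomial τ R) k) = rename Sum.inl (esymm σ R k) :=
  (AlgEquiv.symm_apply_eq _).mpr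
    (by simpa [map_esymm] using
      (AlgHom.congr_fun (sumAlgEquiv_comp_rename_inl R σ τ) (esymm σ R k)).symm)

theorem mem_adjoin_esymm_union_esymm_of_rename_sumMap_eq [Fintype σ] [Fintype τ] {m n : ℕ}
    (hm : Fintype.card σ ≤ m) (hn : Fintype.card τ ≤ n) {p : MvPolynomial (σ ⊕ τ) R}
    (hp : ∀ (e : Equiv.Perm σ) (e' : Equiv.Perm τ), rename (Sum.map e e') p = p) :
    p ∈ Algebra.adjoin R
      ((Set.range fun k : Fin m => rename Sum.inl (esymm σ R (k + 1))) ∪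
        Set.range fun k : Fin n => rename Sum.inr (esymm τ R (k + 1))) := by
  set q := sumAlgEquiv R σ τ p
  have hq : q.IsSymmetric := fun e => by
    simpa [q] using (sumAlgEquiv_rename_sumMap_id e p).symm.trans (congrArg _ (hp e 1))
  have hcoeff : ∀ d, q.coeff d ∈ symmetricSubalgebra τ R := fun d e' => by
    calc rename e' (q.coeff d) = (map (rename e').toRingHom q).coeff d :=
          (coeff_map _ _ _).symm
      _ = q.coeff d := by
        rw [← sumAlgEquiv_rename_id_sumMap]
        simpa using congrArg (fun p => (sumAlgEquiv R σ τ p).coeff d) (hp 1 e')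
  suffices h : Algebra.adjoin R (C '' (symmetricSubalgebra τ R : Set (MvPolynomial τ R)) ∪
      Set.range fun k : Fin m => esymm σ (MvPolynomial τ R) (k + 1)) ≤
      Subalgebra.comap (sumAlgEquiv R σ τ).symm.toAlgHom (Algebra.adjoin R _) by
    simpa [q] using h (mem_adjoin_C_union_esymm_of_isSymmetric hm _ hq hcoeff)
  rw [Algebra.adjoin_le_iff]
  rintro _ (⟨a, ha, rfl⟩ | ⟨k, rfl⟩)
  · have ha' := (Subalgebra.mem_map (f := rename (R := R) (Sum.inr (α := σ)))).mpr
      ⟨a, mem_adjoin_esymm_of_isSymmetric hn ha, rfl⟩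
    rw [AlgHom.map_adjoin, ← Set.range_comp] at ha'
    change (sumAlgEquiv R σ τ).symm _ ∈ Algebra.adjoin R _
    rw [sumAlgEquiv_symm_C]
    exact Algebra.adjoin_mono Set.subset_union_right ha'
  · change (sumAlgEquiv R σ τ).symm _ ∈ Algebra.adjoin R _
    rw [sumAlgEquiv_symm_esymm]
    exact Algebra.subset_adjoin (Or.inl ⟨k, rfl⟩)

end MvPolynomial

section WittMultiplication

variable (R σ τ : Type*) [CommRing R] [Fintype σ] [Fintype τ]

noncomputable def wittMulPolynomial : Polynomial (MvPolynomial (σ ⊕ τ) R) :=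
  ∏ i : σ, ∏ j : τ, (1 - Polynomial.C (X (Sum.inl i) * X (Sum.inr j)) * Polynomial.X)

variable {R σ τ}

theorem rename_sumMap_coeff_wittMulPolynomial (e : Equiv.Perm σ) (e' : Equiv.Perm τ) (m : ℕ) :
    rename (Sum.map e e') ((wittMulPolynomial R σ τ).coeff m) =
      (wittMulPolynomial R σ τ).coeff m := by
  have hmap : (wittMulPolynomial R σ τ).map (rename (Sum.map e e')).toRingHom =
      wittMulPolynomial R σ τ := by
    simp only [wittMulPolynomial, Polynomial.map_prod, Polynomial.map_sub, Polynomial.map_one,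
      Polynomial.map_mul, Polynomial.map_C, Polynomial.map_X, map_mul]
    exact Fintype.prod_equiv e _ _ fun i => Fintype.prod_equiv e' _ _ fun j => by simp
  conv_rhs => rw [← hmap]
  exact (Polynomial.coeff_map _ _).symm

end WittMultiplication

theorem witt_multiplication_coeff_mem_adjoin_esymm_general
    (r s : ℕ) (m : ℕ) :
    (∏ i : Fin r, ∏ j : Fin s,
        (1 - Polynomial.C (MvPolynomial.X (Sum.inl i) * MvPolynomial.X (Sum.inr j)) *
          Polynomial.X) :
      Polynomial (MvPolynomial (Fin r ⊕ Fin s) ℤ)).coeff m ∈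
    Algebra.adjoin ℤ
      ((Set.range fun k : Fin r =>
          MvPolynomial.rename Sum.inl (MvPolynomial.esymm (Fin r) ℤ ((k : ℕ) + 1))) ∪
        (Set.range fun k : Fin s =>
          MvPolynomial.rename Sum.inr (MvPolynomial.esymm (Fin s) ℤ ((k : ℕ) + 1)))) :=
  mem_adjoin_esymm_union_esymm_of_rename_sumMap_eq (by simp) (by simp)
    (rename_sumMap_coeff_wittMulPolynomial · · m)

/-- each coefficient of `t^m` in `∏_{i,j} (1 - X_i Y_j t)` lies in the
subring generated by the elementary symmetric polynomials in the `X`'s together with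
those in the `Y`'s.  (The Witt multiplication is a morphism of schemes
`W^{≤r} × W^{≤s} → W^{≤rs}`.) -/
theorem witt_multiplication_coeff_mem_adjoin_esymm
    (r s : ℕ) (hr : 1 ≤ r) (hs : 1 ≤ s) (m : ℕ) :
    (∏ i : Fin r, ∏ j : Fin s,
        (1 - Polynomial.C (MvPolynomial.X (Sum.inl i) * MvPolynomial.X (Sum.inr j)) *
          Polynomial.X) :
      Polynomial (MvPolynomial (Fin r ⊕ Fin s) ℤ)).coeff m ∈
    Algebra.adjoin ℤ
      ((Set.range fun k : Fin r =>
          MvPolynomial.rename Sum.inl (MvPolynomial.esymm (Fin r) ℤ ((k : ℕ) + 1))) ∪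
        (Set.range fun k : Fin s =>
          MvPolynomial.rename Sum.inr (MvPolynomial.esymm (Fin s) ℤ ((k : ℕ) + 1)))) :=
  witt_multiplication_coeff_mem_adjoin_esymm_general r s m
end
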